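/- Let (U_i)_{i≥1}, (Y_i)_{i≥1}, (Q_i)_{i≥0} be finite-valued random processes such that Q_i = g(Q_{i-1}, Y_i) for a deterministic g (so Q_{i-1} is a function of (Q_0, Y^{i-1})). Then for each i, I(U_i, U_{i-1}; Y_i | Y^{i-1}, Q_0) ≥ I(U_i, U_{i-1}; Y_i | Q_{i-1}) − I(Y_i; Y^{i-1} | Q_{i-1}). -/
import Mathlib


open scoped Classical

noncomputable section

variable {Ω : Type*} [Fintype Ω]

/-- Probability that the random variable `f` (on finite sample space `Ω`
with mass function `μ`) takes value `a`. -/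
def prob {α : Type*} (μ : Ω → ℝ) (f : Ω → α) (a : α) : ℝ :=
  ∑ ω : Ω, if f ω = a then μ ω else 0

/-- Shannon entropy (in bits) of the random variable `f`. -/
def ent {α : Type*} [Fintype α] (μ : Ω → ℝ) (f : Ω → α) : ℝ :=
  ∑ a : α, -(prob μ f a * Real.logb 2 (prob μ f a))

/-- Conditional entropy `H(f | g)` in bits. -/
def condEnt {α β : Type*} [Fintype α] [Fintype β]
    (μ : Ω → ℝ) (f : Ω → α) (g : Ω → β) : ℝ :=
  ent μ (fun ω => (f ω, g ω)) - ent μ g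

/-- Mutual information `I(f ; g)` in bits. -/
def mi {α β : Type*} [Fintype α] [Fintype β]
    (μ : Ω → ℝ) (f : Ω → α) (g : Ω → β) : ℝ :=
  ent μ f + ent μ g - ent μ (fun ω => (f ω, g ω))

/-- Conditional mutual information `I(f ; g | h)` in bits. -/
def cmi {α β γ : Type*} [Fintype α] [Fintype β] [Fintype γ]
    (μ : Ω → ℝ) (f : Ω → α) (g : Ω → β) (h : Ω → γ) : ℝ :=
  condEnt μ f h - condEnt μ f (fun ω => (g ω, h ω))

/-- `f` and `g` are conditionally independent given `h`
(the Markov chain `f − h − g`). -/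
def condIndep {α β γ : Type*} (μ : Ω → ℝ) (f : Ω → α) (g : Ω → β) (h : Ω → γ) : Prop :=
  ∀ a b c, prob μ (fun ω => (f ω, g ω, h ω)) (a, b, c) * prob μ h c =
    prob μ (fun ω => (f ω, h ω)) (a, c) * prob μ (fun ω => (g ω, h ω)) (b, c)

end


noncomputable section QGraphHelpers
variable {Ω : Type*} [Fintype Ω]

lemma prob_nonneg {α : Type*} (μ : Ω → ℝ) (hμ0 : ∀ ω, 0 ≤ μ ω) (f : Ω → α) (a : α) :
    0 ≤ prob μ f a :=
  Finset.sum_nonneg fun ω _ => by by_cases h : f ω = a <;> simp [h, hμ0 ω]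

lemma prob_comp {α β : Type*} [Fintype α] (μ : Ω → ℝ) (f : Ω → α) (π : α → β) (c : β) :
    prob μ (fun ω => π (f ω)) c = ∑ a : α, if π a = c then prob μ f a else 0 := by
  unfold prob
  have h1 : ∀ a : α, (if π a = c then ∑ ω : Ω, (if f ω = a then μ ω else 0) else 0)
      = ∑ ω : Ω, if f ω = a then (if π a = c then μ ω else 0) else 0 := by
    intro a
    by_cases h : π a = c <;> simp [h]
  rw [Finset.sum_congr rfl fun a _ => h1 a, Finset.sum_comm]
  refine Finset.sum_congr rfl fun ω _ => ?_
  rw [Finset.sum_ite_eq]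
  simp

lemma prob_fst_marginal {α β : Type*} [Fintype α] (μ : Ω → ℝ) (f : Ω → α) (g : Ω → β) (b : β) :
    prob μ g b = ∑ a : α, prob μ (fun ω => (f ω, g ω)) (a, b) := by
  unfold prob
  rw [Finset.sum_comm]
  refine Finset.sum_congr rfl fun ω _ => ?_
  simp only [Prod.mk.injEq]
  simp only [ite_and]
  rw [Finset.sum_ite_eq]
  simp

lemma ite_sum_zero {ι M : Type*} [AddCommMonoid M] (s : Finset ι) (P : Prop) [Decidable P]
    (f : ι → M) : (if P then ∑ i ∈ s, f i else 0) = ∑ i ∈ s, (if P then f i else 0) := by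
  split <;> simp

lemma prob_pair_comp {α β γ : Type*} [Fintype β] (μ : Ω → ℝ) (Y : Ω → α) (J : Ω → β)
    (e : β → γ) (y : α) (c : γ) :
    prob μ (fun ω => (Y ω, e (J ω))) (y, c)
      = ∑ b : β, if e b = c then prob μ (fun ω => (Y ω, J ω)) (y, b) else 0 := by
  unfold prob
  beta_reduce
  simp only [ite_sum_zero]
  rw [Finset.sum_comm]
  refine Finset.sum_congr rfl fun ω _ => ?_
  rw [Finset.sum_eq_single (J ω)]
  · by_cases h3 : Y ω = y <;> by_cases h4 : e (J ω) = c <;> simp [h3, h4, Prod.ext_iff]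
  · intro b _ hb
    have h5 : J ω ≠ b := Ne.symm hb
    simp [Prod.ext_iff, h5]
  · simp

def entN {α : Type*} [Fintype α] (μ : Ω → ℝ) (f : Ω → α) : ℝ :=
  ∑ a : α, Real.negMulLog (prob μ f a)

lemma ent_eq_entN {α : Type*} [Fintype α] (μ : Ω → ℝ) (f : Ω → α) :
    ent μ f = entN μ f / Real.log 2 := by
  unfold ent entN
  rw [Finset.sum_div]
  refine Finset.sum_congr rfl fun a _ => ?_
  rw [Real.negMulLog, Real.logb]
  ring

lemma entN_comp_inj {α β : Type*} [Fintype α] [Fintype β] (μ : Ω → ℝ)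
    (e : α → β) (he : Function.Injective e) (f : Ω → α) (g : Ω → β)
    (hg : ∀ ω, g ω = e (f ω)) : entN μ g = entN μ f := by
  have hgf : g = fun ω => e (f ω) := funext hg
  subst hgf
  unfold entN
  have key : ∀ a : α, prob μ (fun ω => e (f ω)) (e a) = prob μ f a := by
    intro a
    rw [prob_comp]
    rw [Finset.sum_congr rfl fun a' _ => by
      rw [show (if e a' = e a then prob μ f a' else 0) = (if a' = a then prob μ f a' else 0) from
        by simp [he.eq_iff]]]
    rw [Finset.sum_ite_eq']
    simp
  have zero : ∀ b : β, b ∉ Finset.univ.image e → prob μ (fun ω => e (f ω)) b = 0 := by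
    intro b hb
    rw [prob_comp]
    refine Finset.sum_eq_zero fun a _ => ?_
    have : e a ≠ b := fun ha => hb (Finset.mem_image.mpr ⟨a, Finset.mem_univ a, ha⟩)
    simp [this]
  rw [← Finset.sum_subset (Finset.subset_univ (Finset.univ.image e))
    (fun b _ hb => by rw [zero b hb]; simp)]
  rw [Finset.sum_image (fun a _ a' _ h => he h)]
  exact Finset.sum_congr rfl fun a _ => by rw [key a]

lemma abstract_key {𝒴 β γ : Type*} [Fintype 𝒴] [Fintype β] [Fintype γ]
    (p : 𝒴 → β → ℝ) (q : β → ℝ) (P : 𝒴 → γ → ℝ) (Q : γ → ℝ) (e : β → γ)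
    (hpnn : ∀ y b, 0 ≤ p y b)
    (hq : ∀ b, q b = ∑ y : 𝒴, p y b)
    (hP : ∀ y c, P y c = ∑ b : β, if e b = c then p y b else 0)
    (hQ : ∀ c, Q c = ∑ b : β, if e b = c then q b else 0) :
    (∑ y : 𝒴, ∑ b : β, Real.negMulLog (p y b)) - (∑ b : β, Real.negMulLog (q b)) ≤
      (∑ y : 𝒴, ∑ c : γ, Real.negMulLog (P y c)) - (∑ c : γ, Real.negMulLog (Q c)) := by
  classical
  have hqnn : ∀ b, 0 ≤ q b := fun b =>
    (hq b) ▸ Finset.sum_nonneg fun y _ => hpnn y b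
  have hPnn : ∀ y c, 0 ≤ P y c := fun y c =>
    (hP y c) ▸ Finset.sum_nonneg fun b _ => by by_cases h : e b = c <;> simp [h, hpnn y b]
  have hQnn : ∀ c, 0 ≤ Q c := fun c =>
    (hQ c) ▸ Finset.sum_nonneg fun b _ => by by_cases h : e b = c <;> simp [h, hqnn b]
  have hpq : ∀ y b, p y b ≤ q b := by
    intro y b; rw [hq b]
    exact Finset.single_le_sum (fun y' _ => hpnn y' b) (Finset.mem_univ y)
  have hpP : ∀ y b, p y b ≤ P y (e b) := by
    intro y b; rw [hP y (e b)]
    have h := Finset.single_le_sum (f := fun b' => if e b' = e b then p y b' else 0)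
      (fun b' _ => by by_cases h : e b' = e b <;> simp [h, hpnn y b']) (Finset.mem_univ b)
    simpa using h
  have hqQ : ∀ b, q b ≤ Q (e b) := by
    intro b; rw [hQ (e b)]
    have h := Finset.single_le_sum (f := fun b' => if e b' = e b then q b' else 0)
      (fun b' _ => by by_cases h : e b' = e b <;> simp [h, hqnn b']) (Finset.mem_univ b)
    simpa using h
  have hPQ : ∀ c, ∑ y : 𝒴, P y c = Q c := by
    intro c
    rw [hQ c]
    rw [Finset.sum_congr rfl fun y _ => hP y c, Finset.sum_comm]
    refine Finset.sum_congr rfl fun b _ => ?_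
    rw [← ite_sum_zero]
    by_cases h : e b = c <;> simp [h, hq b]
  have hterm : ∀ y b, p y b - q b * P y (e b) / Q (e b) ≤
      p y b * Real.log (p y b) - p y b * Real.log (q b)
        - p y b * Real.log (P y (e b)) + p y b * Real.log (Q (e b)) := by
    intro y b
    rcases eq_or_lt_of_le (hpnn y b) with h0 | hpos
    · have hr : 0 ≤ q b * P y (e b) / Q (e b) :=
        div_nonneg (mul_nonneg (hqnn b) (hPnn y (e b))) (hQnn (e b))
      rw [← h0]
      simp only [zero_mul, zero_sub, sub_zero, zero_add, add_zero, sub_self]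
      linarith
    · have hq0 : 0 < q b := lt_of_lt_of_le hpos (hpq y b)
      have hP0 : 0 < P y (e b) := lt_of_lt_of_le hpos (hpP y b)
      have hQ0 : 0 < Q (e b) := lt_of_lt_of_le hq0 (hqQ b)
      set x := q b * P y (e b) / Q (e b) with hx
      have hx0 : 0 < x := by positivity
      have hlog : Real.log (x / p y b) ≤ x / p y b - 1 :=
        Real.log_le_sub_one_of_pos (by positivity)
      rw [Real.log_div hx0.ne' hpos.ne'] at hlog
      have h2' : p y b * (Real.log x - Real.log (p y b)) ≤ x - p y b := by
        have h2 := mul_le_mul_of_nonneg_left hlog hpos.le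
        have h3 : p y b * (x / p y b - 1) = x - p y b := by field_simp
        linarith
      have hlx : Real.log x = Real.log (q b) + Real.log (P y (e b)) - Real.log (Q (e b)) := by
        rw [hx, Real.log_div (mul_pos hq0 hP0).ne' hQ0.ne', Real.log_mul hq0.ne' hP0.ne']
      have h4 : p y b * (Real.log x - Real.log (p y b)) =
          p y b * Real.log (q b) + p y b * Real.log (P y (e b))
            - p y b * Real.log (Q (e b)) - p y b * Real.log (p y b) := by
        rw [hlx]; ring
      linarith
  have hrq : ∀ b, ∑ y : 𝒴, q b * P y (e b) / Q (e b) = q b := by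
    intro b
    rcases eq_or_lt_of_le (hQnn (e b)) with h0 | hQ0
    · have hqb : q b = 0 := le_antisymm ((hqQ b).trans h0.ge) (hqnn b)
      simp [hqb]
    · rw [← Finset.sum_div, ← Finset.mul_sum, hPQ (e b)]
      field_simp
  have hsum0 : ∑ y : 𝒴, ∑ b : β, (p y b - q b * P y (e b) / Q (e b)) = 0 := by
    rw [Finset.sum_comm]
    have h5 : ∀ b, ∑ y : 𝒴, (p y b - q b * P y (e b) / Q (e b)) = 0 := by
      intro b; rw [Finset.sum_sub_distrib, ← hq b, hrq b, sub_self]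
    rw [Finset.sum_congr rfl fun b _ => h5 b, Finset.sum_const_zero]
  have main : (0:ℝ) ≤ ∑ y : 𝒴, ∑ b : β, (p y b * Real.log (p y b) - p y b * Real.log (q b)
      - p y b * Real.log (P y (e b)) + p y b * Real.log (Q (e b))) := by
    rw [← hsum0]
    exact Finset.sum_le_sum fun y _ => Finset.sum_le_sum fun b _ => hterm y b
  have hsplit : ∑ y : 𝒴, ∑ b : β, (p y b * Real.log (p y b) - p y b * Real.log (q b)
      - p y b * Real.log (P y (e b)) + p y b * Real.log (Q (e b)))
      = (∑ y : 𝒴, ∑ b : β, p y b * Real.log (p y b))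
        - (∑ y : 𝒴, ∑ b : β, p y b * Real.log (q b))
        - (∑ y : 𝒴, ∑ b : β, p y b * Real.log (P y (e b)))
        + (∑ y : 𝒴, ∑ b : β, p y b * Real.log (Q (e b))) := by
    simp only [Finset.sum_add_distrib, Finset.sum_sub_distrib]
  have hS2 : ∑ y : 𝒴, ∑ b : β, p y b * Real.log (q b) = ∑ b : β, q b * Real.log (q b) := by
    rw [Finset.sum_comm]
    refine Finset.sum_congr rfl fun b _ => ?_
    rw [← Finset.sum_mul, ← hq b]
  have hS3 : ∑ y : 𝒴, ∑ b : β, p y b * Real.log (P y (e b))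
      = ∑ y : 𝒴, ∑ c : γ, P y c * Real.log (P y c) := by
    refine Finset.sum_congr rfl fun y _ => ?_
    have step1 : ∀ b : β, p y b * Real.log (P y (e b))
        = ∑ c : γ, if e b = c then p y b * Real.log (P y c) else 0 := by
      intro b; rw [Finset.sum_ite_eq]; simp
    rw [Finset.sum_congr rfl fun b _ => step1 b, Finset.sum_comm]
    refine Finset.sum_congr rfl fun c _ => ?_
    rw [hP y c, Finset.sum_mul]
    refine Finset.sum_congr rfl fun b _ => ?_
    by_cases h : e b = c <;> simp [h]
  have hS4 : ∑ y : 𝒴, ∑ b : β, p y b * Real.log (Q (e b)) = ∑ c : γ, Q c * Real.log (Q c) := by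
    rw [Finset.sum_comm]
    have e1 : ∀ b, ∑ y : 𝒴, p y b * Real.log (Q (e b)) = q b * Real.log (Q (e b)) := by
      intro b; rw [← Finset.sum_mul, ← hq b]
    rw [Finset.sum_congr rfl fun b _ => e1 b]
    have step1 : ∀ b : β, q b * Real.log (Q (e b))
        = ∑ c : γ, if e b = c then q b * Real.log (Q c) else 0 := by
      intro b; rw [Finset.sum_ite_eq]; simp
    rw [Finset.sum_congr rfl fun b _ => step1 b, Finset.sum_comm]
    refine Finset.sum_congr rfl fun c _ => ?_
    rw [hQ c, Finset.sum_mul]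
    refine Finset.sum_congr rfl fun b _ => ?_
    by_cases h : e b = c <;> simp [h]
  have n1 : ∑ y : 𝒴, ∑ b : β, Real.negMulLog (p y b)
      = -∑ y : 𝒴, ∑ b : β, p y b * Real.log (p y b) := by
    simp [Real.negMulLog_eq_neg, Finset.sum_neg_distrib]
  have n2 : ∑ b : β, Real.negMulLog (q b) = -∑ b : β, q b * Real.log (q b) := by
    simp [Real.negMulLog_eq_neg, Finset.sum_neg_distrib]
  have n3 : ∑ y : 𝒴, ∑ c : γ, Real.negMulLog (P y c)
      = -∑ y : 𝒴, ∑ c : γ, P y c * Real.log (P y c) := by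
    simp [Real.negMulLog_eq_neg, Finset.sum_neg_distrib]
  have n4 : ∑ c : γ, Real.negMulLog (Q c) = -∑ c : γ, Q c * Real.log (Q c) := by
    simp [Real.negMulLog_eq_neg, Finset.sum_neg_distrib]
  linarith [main, hsplit, hS2, hS3, hS4, n1, n2, n3, n4]

lemma condEntN_mono {𝒴 β γ : Type*} [Fintype 𝒴] [Fintype β] [Fintype γ]
    (μ : Ω → ℝ) (hμ0 : ∀ ω, 0 ≤ μ ω) (Y : Ω → 𝒴) (J : Ω → β) (e : β → γ)
    (K : Ω → γ) (hK : ∀ ω, K ω = e (J ω)) :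
    entN μ (fun ω => (Y ω, J ω)) - entN μ J ≤
      entN μ (fun ω => (Y ω, K ω)) - entN μ K := by
  have hKf : K = fun ω => e (J ω) := funext hK
  subst hKf
  have e1 : entN μ (fun ω => (Y ω, J ω))
      = ∑ y : 𝒴, ∑ b : β, Real.negMulLog (prob μ (fun ω => (Y ω, J ω)) (y, b)) := by
    rw [entN, Fintype.sum_prod_type]
  have e2 : entN μ (fun ω => (Y ω, e (J ω)))
      = ∑ y : 𝒴, ∑ c : γ, Real.negMulLog (prob μ (fun ω => (Y ω, e (J ω))) (y, c)) := by
    rw [entN, Fintype.sum_prod_type]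
  rw [e1, e2, entN, entN]
  exact abstract_key (fun y b => prob μ (fun ω => (Y ω, J ω)) (y, b))
    (fun b => prob μ J b) (fun y c => prob μ (fun ω => (Y ω, e (J ω))) (y, c))
    (fun c => prob μ (fun ω => e (J ω)) c) e
    (fun y b => prob_nonneg μ hμ0 _ _)
    (fun b => prob_fst_marginal μ Y J b)
    (fun y c => prob_pair_comp μ Y J e y c)
    (fun c => prob_comp μ J e c)


end QGraphHelpers

/-- Key step of the Q-graph lower bound: if `Q_{i-1}` is a deterministic
function of the past outputs `Y^{i-1}` (the initial node `Q_0` being fixed),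
then `I(U_i,U_{i-1}; Y_i | Y^{i-1}) ≥ I(U_i,U_{i-1}; Y_i | Q_{i-1}) −
I(Y_i; Y^{i-1} | Q_{i-1})`. -/
theorem qgraph_key_inequality
    {Ω 𝒰 𝒴p 𝒴 𝒬 : Type*} [Fintype Ω] [Fintype 𝒰] [Fintype 𝒴p] [Fintype 𝒴] [Fintype 𝒬]
    (μ : Ω → ℝ) (hμ0 : ∀ ω, 0 ≤ μ ω) (hμ1 : ∑ ω : Ω, μ ω = 1)
    (Ui Uim : Ω → 𝒰) (Yi : Ω → 𝒴) (Ypast : Ω → 𝒴p) (Qim : Ω → 𝒬)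
    (Φ : 𝒴p → 𝒬) (hQ : ∀ ω, Qim ω = Φ (Ypast ω)) :
    cmi μ (fun ω => (Ui ω, Uim ω)) Yi Qim - cmi μ Yi Ypast Qim ≤
      cmi μ (fun ω => (Ui ω, Uim ω)) Yi Ypast := by
  have hL : (0:ℝ) < Real.log 2 := Real.log_pos one_lt_two
  set U : Ω → 𝒰 × 𝒰 := fun ω => (Ui ω, Uim ω) with hU
  have E1 : entN μ (fun ω => (Ypast ω, Qim ω)) = entN μ Ypast := by
    refine entN_comp_inj μ (fun p => (p, Φ p)) ?_ Ypast _ (fun ω => by rw [hQ ω])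
    intro a b h
    simpa using congrArg Prod.fst h
  have E2 : entN μ (fun ω => (Yi ω, (Ypast ω, Qim ω))) = entN μ (fun ω => (Yi ω, Ypast ω)) := by
    refine entN_comp_inj μ (fun x : 𝒴 × 𝒴p => (x.1, (x.2, Φ x.2))) ?_
      (fun ω => (Yi ω, Ypast ω)) _ (fun ω => by rw [hQ ω])
    rintro ⟨a1, a2⟩ ⟨b1, b2⟩ h
    simp only [Prod.mk.injEq] at h
    simp [h.1, h.2.1]
  have E3 : entN μ (fun ω => (U ω, (Yi ω, Qim ω)))
      = entN μ (fun ω => (Yi ω, (U ω, Qim ω))) := by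
    refine entN_comp_inj μ (fun x : 𝒴 × ((𝒰 × 𝒰) × 𝒬) => (x.2.1, (x.1, x.2.2))) ?_
      (fun ω => (Yi ω, (U ω, Qim ω))) _ (fun ω => rfl)
    rintro ⟨a1, a2, a3⟩ ⟨b1, b2, b3⟩ h
    simp only [Prod.mk.injEq] at h
    simp [h.1, h.2.1, h.2.2]
  have E4 : entN μ (fun ω => (U ω, (Yi ω, Ypast ω)))
      = entN μ (fun ω => (Yi ω, (U ω, Ypast ω))) := by
    refine entN_comp_inj μ (fun x : 𝒴 × ((𝒰 × 𝒰) × 𝒴p) => (x.2.1, (x.1, x.2.2))) ?_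
      (fun ω => (Yi ω, (U ω, Ypast ω))) _ (fun ω => rfl)
    rintro ⟨a1, a2, a3⟩ ⟨b1, b2, b3⟩ h
    simp only [Prod.mk.injEq] at h
    simp [h.1, h.2.1, h.2.2]
  have KEY : entN μ (fun ω => (Yi ω, (U ω, Ypast ω))) - entN μ (fun ω => (U ω, Ypast ω)) ≤
      entN μ (fun ω => (Yi ω, (U ω, Qim ω))) - entN μ (fun ω => (U ω, Qim ω)) :=
    condEntN_mono μ hμ0 Yi (fun ω => (U ω, Ypast ω))
      (fun x => (x.1, Φ x.2)) (fun ω => (U ω, Qim ω)) (fun ω => by simp only [hQ ω])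
  have hdiv : ∀ A B C D : ℝ, A - B ≤ C - D →
      A / Real.log 2 - B / Real.log 2 ≤ C / Real.log 2 - D / Real.log 2 := by
    intro A B C D h
    rw [← sub_div, ← sub_div]
    gcongr
  have KEY' := hdiv _ _ _ _ KEY
  have E1' : entN μ (fun ω => (Ypast ω, Qim ω)) / Real.log 2
      = entN μ Ypast / Real.log 2 := by rw [E1]
  have E2' : entN μ (fun ω => (Yi ω, (Ypast ω, Qim ω))) / Real.log 2
      = entN μ (fun ω => (Yi ω, Ypast ω)) / Real.log 2 := by rw [E2]
  have E3' : entN μ (fun ω => (U ω, (Yi ω, Qim ω))) / Real.log 2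
      = entN μ (fun ω => (Yi ω, (U ω, Qim ω))) / Real.log 2 := by rw [E3]
  have E4' : entN μ (fun ω => (U ω, (Yi ω, Ypast ω))) / Real.log 2
      = entN μ (fun ω => (Yi ω, (U ω, Ypast ω))) / Real.log 2 := by rw [E4]
  simp only [cmi, condEnt, ent_eq_entN]
  linarith [KEY', E1', E2', E3', E4']
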